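/- Let c₀ > 0, p ≥ 2, 2γ > p, and suppose the functional J(w) = (1/p)‖w‖^p − (1/(2γ))Φ(w) satisfies: ⟨J'(w), w⟩ ≥ (1/4)‖w‖^p whenever ‖w‖ ≤ ρ, where ρ > 0. If {w_k} is a Palais–Smale sequence at level c with lim ‖w_k‖^p = 2γpc/(2γ−p) and c < (2γ−p)ρ^p/(2γp), then ‖w_k‖ → 0 and c = 0. -/

import Mathlib

open Filter

/-!
On the ball `‖w‖ ≤ ρ` coercivity gives `‖w‖^p ≲ ⟨J'(w), w⟩ ≤ ‖J'(w)‖_* ‖w‖`, so a Palais–Smale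
sequence that stays in the ball has `‖w_k‖^p → 0`. The bound on `c` says exactly that the limit
`2γpc/(2γ−p)` of `‖w_k‖^p` lies below `ρ^p`, so the sequence is eventually in the ball; hence the
limit is `0`, which forces `c = 0`.
-/

lemma eventually_le_of_tendsto_rpow {x : ℕ → ℝ} {p ρ L : ℝ} (hp : 0 < p) (hρ : 0 ≤ ρ)
    (hx : Tendsto (fun k => x k ^ p) atTop (nhds L)) (hL : L < ρ ^ p) :
    ∀ᶠ k in atTop, x k ≤ ρ := by
  filter_upwards [hx.eventually_lt_const hL] with k hk
  by_contra! hρk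
  exact (Real.rpow_le_rpow hρ hρk.le hp.le).not_gt hk

lemma tendsto_zero_of_tendsto_rpow_zero {x : ℕ → ℝ} {p : ℝ} (hp : 0 < p) (hx₀ : ∀ k, 0 ≤ x k)
    (hx : Tendsto (fun k => x k ^ p) atTop (nhds 0)) :
    Tendsto x atTop (nhds 0) := by
  have hroot : Tendsto (fun y : ℝ => y ^ p⁻¹) (nhds 0) (nhds 0) := by
    simpa [Real.zero_rpow (inv_ne_zero hp.ne')] using
      (Real.continuousAt_rpow_const 0 p⁻¹ (Or.inr (inv_nonneg.mpr hp.le))).tendsto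
  refine (hroot.comp hx).congr fun k => ?_
  exact Real.rpow_rpow_inv (hx₀ k) hp.ne'

section PalaisSmale

variable {W : Type*} [NormedAddCommGroup W] {p ρ a : ℝ} {Φ : W → ℝ}

lemma mul_rpow_le_of_coercive_of_norm_le (hcoerc : ∀ z : W, ‖z‖ ≤ ρ → a * ‖z‖ ^ p ≤ ‖z‖ ^ p - Φ z)
    {z : W} {e : ℝ} (hz : ‖z‖ ≤ ρ) (hps : |‖z‖ ^ p - Φ z| ≤ e * ‖z‖) :
    a * ‖z‖ ^ p ≤ |e| * ρ :=
  calc a * ‖z‖ ^ p ≤ ‖z‖ ^ p - Φ z := hcoerc z hz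
    _ ≤ |‖z‖ ^ p - Φ z| := le_abs_self _
    _ ≤ e * ‖z‖ := hps
    _ ≤ |e| * ρ := mul_le_mul (le_abs_self e) hz (norm_nonneg z) (abs_nonneg e)

lemma tendsto_norm_rpow_zero_of_coercive (hp : 0 < p) (hρ : 0 ≤ ρ) (ha : 0 < a)
    (hcoerc : ∀ z : W, ‖z‖ ≤ ρ → a * ‖z‖ ^ p ≤ ‖z‖ ^ p - Φ z)
    {w : ℕ → W} {ε : ℕ → ℝ} (hε : Tendsto ε atTop (nhds 0))
    (hps : ∀ k, |‖w k‖ ^ p - Φ (w k)| ≤ ε k * ‖w k‖)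
    {L : ℝ} (hlim : Tendsto (fun k => ‖w k‖ ^ p) atTop (nhds L)) (hL : L < ρ ^ p) :
    Tendsto (fun k => ‖w k‖ ^ p) atTop (nhds 0) := by
  have hupper : ∀ᶠ k in atTop, ‖w k‖ ^ p ≤ |ε k| * ρ / a := by
    filter_upwards [eventually_le_of_tendsto_rpow hp hρ hlim hL] with k hk
    rw [le_div_iff₀ ha, mul_comm]
    exact mul_rpow_le_of_coercive_of_norm_le hcoerc hk (hps k)
  have hupper_lim : Tendsto (fun k => |ε k| * ρ / a) atTop (nhds 0) := by
    simpa using (hε.abs.mul_const ρ).div_const a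
  exact tendsto_of_tendsto_of_tendsto_of_le_of_le' tendsto_const_nhds hupper_lim
    (Eventually.of_forall fun k => Real.rpow_nonneg (norm_nonneg _) p) hupper

end PalaisSmale

/-- Dichotomy for Palais–Smale levels: if `⟨J'(w),w⟩ ≥ (1/4)‖w‖^p` whenever `‖w‖ ≤ ρ`
and `{w_k}` is a Palais–Smale sequence at level `c < (2γ−p)ρ^p/(2γp)` with
`lim ‖w_k‖^p = 2γpc/(2γ−p)`, then `‖w_k‖ → 0` and `c = 0`. -/
theorem stmt_16 {W : Type*} [NormedAddCommGroup W] (p γ c ρ : ℝ)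
    (hp : 2 ≤ p) (hγ : p < 2 * γ) (hρ : 0 < ρ)
    (Φ : W → ℝ) (w : ℕ → W) (ε : ℕ → ℝ)
    (hcoerc : ∀ z : W, ‖z‖ ≤ ρ → (1 / 4) * ‖z‖ ^ p ≤ ‖z‖ ^ p - Φ z)
    (hε : Tendsto ε atTop (nhds 0))
    (hps : ∀ k, |‖w k‖ ^ p - Φ (w k)| ≤ ε k * ‖w k‖)
    (hlim : Tendsto (fun k => ‖w k‖ ^ p) atTop (nhds (2 * γ * p * c / (2 * γ - p))))
    (hc : c < (2 * γ - p) * ρ ^ p / (2 * γ * p)) :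
    Tendsto (fun k => ‖w k‖) atTop (nhds 0) ∧ c = 0 := by
  have hp₀ : 0 < p := by linarith
  have hgap : 0 < 2 * γ - p := by linarith
  have hγp : 0 < 2 * γ * p := by nlinarith
  have hlevel : 2 * γ * p * c / (2 * γ - p) < ρ ^ p := by
    rw [div_lt_iff₀ hgap]
    rw [lt_div_iff₀ hγp] at hc
    linarith
  have hzero := tendsto_norm_rpow_zero_of_coercive hp₀ hρ.le (by norm_num) hcoerc hε hps hlim hlevel
  have hc₀ : c = 0 := by
    have := tendsto_nhds_unique hlim hzero
    rw [div_eq_zero_iff, mul_eq_zero] at this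
    rcases this with (h | h) | h
    · exact absurd h hγp.ne'
    · exact h
    · exact absurd h hgap.ne'
  exact ⟨tendsto_zero_of_tendsto_rpow_zero hp₀ (fun k => norm_nonneg _) hzero, hc₀⟩
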